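/- arXiv:1007.2664 — 2 statements merged into one kernel-verified Lean document; each statement's English description precedes it below -/
import Mathlib

section
/- Let 0 < β_L ≤ β_R, T_L = 1/β_L, T_R = 1/β_R, κ = (√(πβ_L/2)+√(πβ_R/2))^{−1} and j* = κ(T_L − T_R) ≥ 0. Define f : ℝ → [0, +∞] by: f(λ) is the unique η > 0 with F(λ,η) = 1 for λ ∈ (−β_R, β_L−β_R) ∪ (0, β_L); f(λ) = 0 for λ ∈ [β_L−β_R, 0]; f(λ) = +∞ for λ ∉ (−β_R, β_L); and let I(j) = sup_{λ∈ℝ} (λ j − f(λ)). Then I(j) = 0 for all j ∈ [0, j*], and I(j) = (β_R − β_L)|j| for all j ∈ [−j*, 0]. -/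
open MeasureTheory

/-- `C(x,η) = ∫₀^∞ v e^{−η/v − x v²/2} dv`. -/
noncomputable def Ccal (x η : ℝ) : ℝ :=
  ∫ v in Set.Ioi (0 : ℝ), v * Real.exp (-η / v - x * v ^ 2 / 2)

/-- `F(λ,η) = β_L β_R C(β_R+λ, η) C(β_L−λ, η)`. -/
noncomputable def Fcal (βL βR lam η : ℝ) : ℝ :=
  βL * βR * Ccal (βR + lam) η * Ccal (βL - lam) η

/-- `f : ℝ → [0,∞]` is the cumulant generating function of the current:
`f(λ)` is the unique positive solution of `F(λ, f(λ)) = 1` on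
`(−β_R, β_L) ∖ [β_L−β_R, 0]`, `f ≡ 0` on the interval between `β_L−β_R` and `0`,
and `f ≡ +∞` outside `(−β_R, β_L)`. -/
def IsCGF (βL βR : ℝ) (f : ℝ → EReal) : Prop :=
  (∀ lam ∈ Set.uIcc (βL - βR) 0, f lam = 0) ∧
  (∀ lam ∈ Set.Ioo (-βR) βL \ Set.uIcc (βL - βR) 0,
      ∃ η : ℝ, 0 < η ∧ Fcal βL βR lam η = 1 ∧ f lam = (η : EReal)) ∧
  (∀ lam ∉ Set.Ioo (-βR) βL, f lam = ⊤)

/-- Legendre transform `I(j) = sup_λ (λ j − f(λ))`. -/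
noncomputable def legendre (f : ℝ → EReal) (j : ℝ) : EReal :=
  ⨆ lam : ℝ, ((lam * j : ℝ) : EReal) - f lam

open Real Set

/-!
Where `f = 0` the supremum defining `I(j)` is attained at `λ = 0` (for `j ≥ 0`) or at
`λ = β_L − β_R` (for `j ≤ 0`), provided `f` lies above the line of slope `j` through that point.
Since `F(λ, η) = F(β_L − β_R − λ, η)`, both lines reduce to the bound `f(λ) ≥ λ j*` for
`λ ∈ (0, β_L)`. From `e^{−η/v} ≥ 1 − η/v` one gets `x C(x, η) ≥ 1 − η √(πx/2)`, and if
`η < λ j*` these bounds already force `F(λ, η) > 1`, because by concavity of the square root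
`√(π(β_R+λ)/2) + √(π(β_L−λ)/2) ≤ √(πβ_L/2) + √(πβ_R/2)`.
-/

lemma integral_Ioi_mul_exp_neg_mul_sq {b : ℝ} (hb : 0 < b) :
    ∫ v in Ioi 0, v * exp (-b * v ^ 2) = (2 * b)⁻¹ := by
  have h := integral_mul_cexp_neg_mul_sq (b := (b : ℂ)) (by simpa using hb)
  have hcast : ∀ r : ℝ,
      (r : ℂ) * Complex.exp (-(b : ℂ) * (r : ℂ) ^ 2) = ((r * exp (-b * r ^ 2) : ℝ) : ℂ) := by
    intro r; push_cast; rfl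
  simp_rw [hcast, integral_complex_ofReal] at h
  exact_mod_cast h

lemma sub_le_mul_exp_neg_div {v : ℝ} (hv : 0 < v) (η : ℝ) : v - η ≤ v * exp (-η / v) := by
  have h := mul_le_mul_of_nonneg_left (add_one_le_exp (-η / v)) hv.le
  rw [mul_add, mul_div_cancel₀ _ hv.ne'] at h
  linarith

lemma sqrt_add_sqrt_le_of_add_eq {a b c d : ℝ} (ha : 0 ≤ a) (hab : a ≤ b) (hbc : b ≤ c)
    (hd : a + d = b + c) : √a + √d ≤ √b + √c := by
  have hsa := sq_sqrt ha
  have hsb := sq_sqrt (ha.trans hab)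
  have hsc := sq_sqrt (ha.trans (hab.trans hbc))
  have hsd := sq_sqrt (show 0 ≤ d by linarith)
  have h1 : √a ≤ √b := sqrt_le_sqrt hab
  have h2 : √b ≤ √c := sqrt_le_sqrt hbc
  have h3 : √c ≤ √d := sqrt_le_sqrt (by linarith)
  nlinarith [sqrt_nonneg a]

lemma integrableOn_Ccal_integrand {x η : ℝ} (hx : 0 < x) (hη : 0 ≤ η) :
    IntegrableOn (fun v ↦ v * exp (-η / v - x * v ^ 2 / 2)) (Ioi 0) := by
  refine Integrable.mono' (integrable_mul_exp_neg_mul_sq (half_pos hx)).integrableOn ?_ ?_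
  · refine ContinuousOn.aestronglyMeasurable (fun v (hv : 0 < v) ↦ ?_) measurableSet_Ioi
    exact ContinuousAt.continuousWithinAt (by fun_prop (disch := exact hv.ne'))
  · filter_upwards [ae_restrict_mem measurableSet_Ioi] with v (hv : 0 < v)
    rw [norm_of_nonneg (by positivity)]
    gcongr
    have : 0 ≤ η / v := by positivity
    linarith [neg_div v η]

lemma one_sub_mul_sqrt_le_mul_Ccal {x η : ℝ} (hx : 0 < x) (hη : 0 ≤ η) :
    1 - η * √(π * x / 2) ≤ x * Ccal x η := by
  have hb : 0 < x / 2 := half_pos hx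
  have hI₁ := (integrable_mul_exp_neg_mul_sq hb).integrableOn (s := Ioi 0)
  have hI₂ := ((integrable_exp_neg_mul_sq hb).const_mul η).integrableOn (s := Ioi 0)
  have hlower : ∫ v in Ioi 0, (v * exp (-(x / 2) * v ^ 2) - η * exp (-(x / 2) * v ^ 2))
      ≤ Ccal x η := by
    refine setIntegral_mono_on (hI₁.sub hI₂) (integrableOn_Ccal_integrand hx hη)
      measurableSet_Ioi fun v (hv : 0 < v) ↦ ?_
    calc v * exp (-(x / 2) * v ^ 2) - η * exp (-(x / 2) * v ^ 2)
        = (v - η) * exp (-(x / 2) * v ^ 2) := by ring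
      _ ≤ v * exp (-η / v) * exp (-(x / 2) * v ^ 2) := by
          gcongr; exact sub_le_mul_exp_neg_div hv η
      _ = v * exp (-η / v - x * v ^ 2 / 2) := by
          rw [mul_assoc, ← exp_add]; ring_nf
  rw [integral_sub hI₁ hI₂, integral_const_mul, integral_Ioi_mul_exp_neg_mul_sq hb,
    integral_gaussian_Ioi] at hlower
  have hsqrt : x * √(π / (x / 2)) = 2 * √(π * x / 2) := by
    rw [show π / (x / 2) = (2 * √(π * x / 2) / x) ^ 2 by
        rw [div_pow, mul_pow, sq_sqrt (by positivity)]; field_simp,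
      sqrt_sq (by positivity)]
    field_simp
  have hunit : x * (2 * (x / 2))⁻¹ = 1 := by field_simp
  calc 1 - η * √(π * x / 2) = x * ((2 * (x / 2))⁻¹ - η * (√(π / (x / 2)) / 2)) := by
        linear_combination -hunit + (η / 2) * hsqrt
    _ ≤ x * Ccal x η := mul_le_mul_of_nonneg_left hlower hx.le

/-- `j* = κ (T_L − T_R)`. -/
noncomputable def fourierCurrent (βL βR : ℝ) : ℝ :=
  (βL⁻¹ - βR⁻¹) / (√(π * βL / 2) + √(π * βR / 2))

lemma one_lt_Fcal_of_lt_mul_fourierCurrent {βL βR lam η : ℝ} (hβL : 0 < βL) (hLR : βL ≤ βR)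
    (hlam : 0 < lam) (hlamL : lam < βL) (hη : 0 ≤ η) (h : η < lam * fourierCurrent βL βR) :
    1 < Fcal βL βR lam η := by
  have hβR : 0 < βR := hβL.trans_le hLR
  have hx₁ : 0 < βR + lam := by linarith
  have hx₂ : 0 < βL - lam := by linarith
  set s₁ := √(π * (βR + lam) / 2)
  set s₂ := √(π * (βL - lam) / 2)
  have hs₁ : 0 ≤ s₁ := sqrt_nonneg _
  have hs₂ : 0 ≤ s₂ := sqrt_nonneg _
  have hS : 0 < √(π * βL / 2) + √(π * βR / 2) := by positivity
  have hspread : s₂ + s₁ ≤ √(π * βL / 2) + √(π * βR / 2) :=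
    sqrt_add_sqrt_le_of_add_eq (by positivity) (by gcongr; linarith) (by gcongr) (by ring)
  have hcurrent : βL * βR * (η * (s₁ + s₂)) < lam * (βR - βL) := by
    rw [fourierCurrent, mul_div_assoc', lt_div_iff₀ hS] at h
    have hβ : βL * βR * (βL⁻¹ - βR⁻¹) = βR - βL := by field_simp
    calc βL * βR * (η * (s₁ + s₂))
        ≤ βL * βR * (η * (√(π * βL / 2) + √(π * βR / 2))) := by
          gcongr βL * βR * (η * ?_); linarith
      _ < βL * βR * (lam * (βL⁻¹ - βR⁻¹)) := by gcongr
      _ = lam * (βR - βL) := by linear_combination lam * hβ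
  have hsmall : lam * (βR - βL) ≤ βL * βR := by nlinarith
  have hηs : η * (s₁ + s₂) < 1 :=
    lt_of_mul_lt_mul_left (by linarith : βL * βR * (η * (s₁ + s₂)) < βL * βR * 1) (by positivity)
  have h₁ : 0 ≤ 1 - η * s₁ := by nlinarith [mul_nonneg hη hs₂]
  have h₂ : 0 ≤ 1 - η * s₂ := by nlinarith [mul_nonneg hη hs₁]
  have hC₁ := one_sub_mul_sqrt_le_mul_Ccal hx₁ hη
  have hC₂ := one_sub_mul_sqrt_le_mul_Ccal hx₂ hη
  have hx : 0 < (βR + lam) * (βL - lam) := mul_pos hx₁ hx₂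
  suffices (βR + lam) * (βL - lam) * 1 < (βR + lam) * (βL - lam) * Fcal βL βR lam η from
    lt_of_mul_lt_mul_left this hx.le
  calc (βR + lam) * (βL - lam) * 1 < βL * βR * ((1 - η * s₁) * (1 - η * s₂)) := by
        nlinarith [mul_nonneg (mul_nonneg hη hs₁) (mul_nonneg hη hs₂), mul_pos hβL hβR]
    _ ≤ βL * βR * ((βR + lam) * Ccal (βR + lam) η * ((βL - lam) * Ccal (βL - lam) η)) :=
        mul_le_mul_of_nonneg_left (mul_le_mul hC₁ hC₂ h₂ (h₁.trans hC₁)) (by positivity)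
    _ = (βR + lam) * (βL - lam) * Fcal βL βR lam η := by rw [Fcal]; ring

lemma mul_fourierCurrent_le_of_Fcal_eq_one {βL βR lam η : ℝ} (hβL : 0 < βL) (hLR : βL ≤ βR)
    (hlam : 0 < lam) (hlamL : lam < βL) (hη : 0 ≤ η) (hF : Fcal βL βR lam η = 1) :
    lam * fourierCurrent βL βR ≤ η := by
  by_contra! h
  exact (one_lt_Fcal_of_lt_mul_fourierCurrent hβL hLR hlam hlamL hη h).ne' hF

lemma Fcal_reflect (βL βR lam η : ℝ) : Fcal βL βR (βL - βR - lam) η = Fcal βL βR lam η := by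
  rw [Fcal, Fcal, show βR + (βL - βR - lam) = βL - lam by ring,
    show βL - (βL - βR - lam) = βR + lam by ring]
  ring

namespace IsCGF

variable {βL βR : ℝ} {f : ℝ → EReal}

lemma nonneg (hf : IsCGF βL βR f) (lam : ℝ) : 0 ≤ f lam := by
  by_cases hflat : lam ∈ uIcc (βL - βR) 0
  · exact (hf.1 lam hflat).ge
  by_cases hdom : lam ∈ Ioo (-βR) βL
  · obtain ⟨η, hη, -, hfη⟩ := hf.2.1 lam ⟨hdom, hflat⟩
    exact hfη ▸ EReal.coe_nonneg.2 hη.le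
  · exact (hf.2.2 lam hdom).symm ▸ le_top

lemma reflect (hf : IsCGF βL βR f) : IsCGF βL βR (fun lam ↦ f (βL - βR - lam)) := by
  have hflat : ∀ lam, βL - βR - lam ∈ uIcc (βL - βR) 0 ↔ lam ∈ uIcc (βL - βR) 0 := by
    intro lam
    simp only [mem_uIcc]
    constructor <;> rintro (⟨h₁, h₂⟩ | ⟨h₁, h₂⟩) <;>
      first | (left; constructor <;> linarith) | (right; constructor <;> linarith)
  have hdom : ∀ lam, βL - βR - lam ∈ Ioo (-βR) βL ↔ lam ∈ Ioo (-βR) βL := by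
    intro lam
    simp only [mem_Ioo]
    constructor <;> rintro ⟨h₁, h₂⟩ <;> constructor <;> linarith
  refine ⟨fun lam h ↦ hf.1 _ ((hflat lam).2 h), fun lam h ↦ ?_,
    fun lam h ↦ hf.2.2 _ (mt (hdom lam).1 h)⟩
  obtain ⟨η, hη, hF, hfη⟩ := hf.2.1 _ ⟨(hdom lam).2 h.1, mt (hflat lam).1 h.2⟩
  exact ⟨η, hη, (Fcal_reflect βL βR lam η).symm.trans hF, hfη⟩

lemma coe_mul_le (hf : IsCGF βL βR f) (hβL : 0 < βL) (hLR : βL ≤ βR) {j : ℝ}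
    (hj : j ∈ Icc 0 (fourierCurrent βL βR)) (lam : ℝ) : ((lam * j : ℝ) : EReal) ≤ f lam := by
  rcases le_or_gt lam 0 with hlam | hlam
  · exact (EReal.coe_nonpos.2 (mul_nonpos_of_nonpos_of_nonneg hlam hj.1)).trans (hf.nonneg lam)
  rcases lt_or_ge lam βL with hlamL | hlamL
  · have hflat : lam ∉ uIcc (βL - βR) 0 := fun h ↦ by
      rw [uIcc_of_le (by linarith)] at h
      exact hlam.not_ge h.2
    obtain ⟨η, hη, hF, hfη⟩ := hf.2.1 lam ⟨⟨by linarith, hlamL⟩, hflat⟩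
    rw [hfη, EReal.coe_le_coe_iff]
    calc lam * j ≤ lam * fourierCurrent βL βR := mul_le_mul_of_nonneg_left hj.2 hlam.le
      _ ≤ η := mul_fourierCurrent_le_of_Fcal_eq_one hβL hLR hlam hlamL hη.le hF
  · rw [hf.2.2 lam fun h ↦ h.2.not_ge hlamL]
    exact le_top

end IsCGF

lemma legendre_eq_of_forall_coe_le {f : ℝ → EReal} {j lam₀ : ℝ}
    (hle : ∀ lam, (((lam - lam₀) * j : ℝ) : EReal) ≤ f lam) (h₀ : f lam₀ = 0) :
    legendre f j = ((lam₀ * j : ℝ) : EReal) := by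
  apply le_antisymm
  · refine iSup_le fun lam ↦ ?_
    calc ((lam * j : ℝ) : EReal) - f lam ≤ ((lam * j : ℝ) : EReal) - (((lam - lam₀) * j : ℝ)) :=
          EReal.sub_le_sub le_rfl (hle lam)
      _ = ((lam₀ * j : ℝ) : EReal) := by rw [← EReal.coe_sub]; ring_nf
  · calc ((lam₀ * j : ℝ) : EReal) = ((lam₀ * j : ℝ) : EReal) - f lam₀ := by rw [h₀, sub_zero]
      _ ≤ legendre f j := le_iSup (fun lam ↦ ((lam * j : ℝ) : EReal) - f lam) lam₀

/-- The Legendre transform `I` of the cumulant generating function vanishes on `[0, j*]`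
and equals `(β_R − β_L)|j|` on `[−j*, 0]`, where `j* = κ(T_L − T_R)`. -/
theorem legendre_cgf_flat_part
    (βL βR TL TR κ jstar : ℝ) (hβL : 0 < βL) (hLR : βL ≤ βR)
    (hTL : TL = 1 / βL) (hTR : TR = 1 / βR)
    (hκ : κ = (Real.sqrt (Real.pi * βL / 2) + Real.sqrt (Real.pi * βR / 2))⁻¹)
    (hjstar : jstar = κ * (TL - TR))
    (f : ℝ → EReal) (hf : IsCGF βL βR f) :
    (∀ j ∈ Set.Icc (0 : ℝ) jstar, legendre f j = 0) ∧
      (∀ j ∈ Set.Icc (-jstar) (0 : ℝ),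
        legendre f j = (((βR - βL) * |j| : ℝ) : EReal)) := by
  have hjstar' : jstar = fourierCurrent βL βR := by
    rw [hjstar, hκ, hTL, hTR, fourierCurrent]; ring
  subst hjstar'
  refine ⟨fun j hj ↦ ?_, fun j hj ↦ ?_⟩
  · simpa using legendre_eq_of_forall_coe_le (lam₀ := 0)
      (fun lam ↦ by simpa using hf.coe_mul_le hβL hLR hj lam) (hf.1 0 right_mem_uIcc)
  · have hj' : -j ∈ Icc 0 (fourierCurrent βL βR) := ⟨by linarith [hj.2], by linarith [hj.1]⟩
    rw [abs_of_nonpos hj.2, show (βR - βL) * -j = (βL - βR) * j by ring]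
    refine legendre_eq_of_forall_coe_le (fun lam ↦ ?_) (hf.1 _ left_mem_uIcc)
    have h := hf.reflect.coe_mul_le hβL hLR hj' (βL - βR - lam)
    rwa [sub_sub_cancel, show (βL - βR - lam) * -j = (lam - (βL - βR)) * j by ring] at h
end

section
/- Let π⁺ and π⁻ be Borel probability measures on (0,∞) with ∫ p² dπ^±(p) < ∞ and ∫ (1/p) dπ^±(p) < ∞. Let (v_k)_{k≥1} be independent random variables with v_k distributed according to π⁺ for odd k and according to π⁻ for even k. Set τ_k = 1/v_k, fix S₀ ≥ 0, S_k = S₀ + τ₁ + ⋯ + τ_k, N_t = Σ_{k≥1} 1(S_k ≤ t), and J[0,t] = (1/2) Σ_{k=1}^{N_t} (−1)^{k+1} v_k². Then almost surely lim_{t→∞} J[0,t]/t = (1/2) (∫ p² dπ⁺(p) − ∫ p² dπ⁻(p)) / (∫ (1/p) dπ⁺(p) + ∫ (1/p) dπ⁻(p)). -/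
open MeasureTheory ProbabilityTheory Filter Topology Finset

/-!
By the strong law of large numbers applied separately to the odd- and even-indexed velocities,
the Cesàro averages of the inter-arrival times `1 / v_k` converge a.s. to
`μ = (π⁺(1/p) + π⁻(1/p)) / 2` and those of the signed rewards `(-1)^(k+1) v_k²` to
`(π⁺(p²) - π⁻(p²)) / 2`. Since `S_n / n → μ > 0`, squeezing `t` between `S_{N_t}` and
`S_{N_t + 1}` gives `N_t / t → 1 / μ` (the elementary renewal theorem), and `J[0,t] / t` is
half the reward average after `N_t` steps times `N_t / t`.
-/

theorem sum_range_two_mul_eq (a : ℕ → ℝ) (m : ℕ) :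
    ∑ i ∈ range (2 * m), a i = ∑ j ∈ range m, a (2 * j) + ∑ j ∈ range m, a (2 * j + 1) := by
  induction m with
  | zero => simp
  | succ m ih =>
    rw [mul_add_one, sum_range_succ, sum_range_succ, ih, sum_range_succ, sum_range_succ]
    ring

theorem sum_range_eq_sum_even_add_sum_odd (a : ℕ → ℝ) (n : ℕ) :
    ∑ i ∈ range n, a i =
      ∑ j ∈ range (n - n / 2), a (2 * j) + ∑ j ∈ range (n / 2), a (2 * j + 1) := by
  obtain ⟨m, rfl | rfl⟩ := Nat.even_or_odd' n
  · rw [show 2 * m - 2 * m / 2 = m by omega, show 2 * m / 2 = m by omega, sum_range_two_mul_eq]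
  · rw [show 2 * m + 1 - (2 * m + 1) / 2 = m + 1 by omega, show (2 * m + 1) / 2 = m by omega,
      sum_range_succ, sum_range_two_mul_eq, sum_range_succ]
    ring

theorem tendsto_comp_div_of_tendsto_div_natCast {α : Type*} {l : Filter α} {g : ℕ → ℝ} {L c : ℝ}
    {k : α → ℕ} {x : α → ℝ} (hg : Tendsto (fun m => g m / m) atTop (𝓝 L))
    (hk : Tendsto k l atTop) (hkx : Tendsto (fun a => (k a : ℝ) / x a) l (𝓝 c)) :
    Tendsto (fun a => g (k a) / x a) l (𝓝 (L * c)) := by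
  refine ((hg.comp hk).mul hkx).congr' ?_
  filter_upwards [hk.eventually_ne_atTop 0] with a ha
  simp only [Function.comp_apply]
  rw [div_mul_div_cancel₀ (Nat.cast_ne_zero.2 ha)]

theorem tendsto_natCast_div_two_div :
    Tendsto (fun n : ℕ => ((n / 2 : ℕ) : ℝ) / n) atTop (𝓝 (1 / 2)) := by
  have := (tendsto_nat_floor_mul_div_atTop (a := (1 / 2 : ℝ)) (by norm_num)).comp
    tendsto_natCast_atTop_atTop
  refine this.congr fun n => ?_
  have hfloor := Nat.floor_div_eq_div (K := ℝ) n 2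
  push_cast at hfloor
  simp only [Function.comp_apply, one_div_mul_eq_div, hfloor]

theorem tendsto_sum_range_div_of_even_odd {a : ℕ → ℝ} {α β : ℝ}
    (he : Tendsto (fun m => (∑ j ∈ range m, a (2 * j)) / m) atTop (𝓝 α))
    (ho : Tendsto (fun m => (∑ j ∈ range m, a (2 * j + 1)) / m) atTop (𝓝 β)) :
    Tendsto (fun n => (∑ i ∈ range n, a i) / n) atTop (𝓝 ((α + β) / 2)) := by
  have hhalf : Tendsto (fun n : ℕ => ((n - n / 2 : ℕ) : ℝ) / n) atTop (𝓝 (1 / 2)) := by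
    have := (tendsto_const_nhds (x := (1 : ℝ))).sub tendsto_natCast_div_two_div
    norm_num at this ⊢
    refine this.congr' ?_
    filter_upwards [eventually_ne_atTop 0] with n hn
    rw [Nat.cast_sub (Nat.div_le_self n 2), sub_div, div_self (Nat.cast_ne_zero.2 hn)]
  have htop : Tendsto (· / 2) atTop atTop := Nat.tendsto_div_const_atTop two_ne_zero
  have htop' : Tendsto (fun n => n - n / 2) atTop atTop :=
    tendsto_atTop_mono (fun n => by omega) htop
  have := (tendsto_comp_div_of_tendsto_div_natCast he htop' hhalf).add
    (tendsto_comp_div_of_tendsto_div_natCast ho htop tendsto_natCast_div_two_div)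
  rw [show (α + β) / 2 = α * (1 / 2) + β * (1 / 2) by ring]
  refine this.congr fun n => ?_
  rw [sum_range_eq_sum_even_add_sum_odd a n, add_div]

theorem sum_Icc_neg_one_pow_succ_mul_eq_sum_range (f : ℕ → ℝ) (n : ℕ) :
    ∑ k ∈ Icc 1 n, (-1 : ℝ) ^ (k + 1) * f (k - 1) = ∑ i ∈ range n, (-1) ^ i * f i := by
  rw [← Ico_add_one_right_eq_Icc, sum_Ico_eq_sum_range]
  refine sum_congr (by simp) fun i _ => ?_
  rw [add_tsub_cancel_left, pow_add, pow_add]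
  ring

noncomputable def renewalCount (s : ℕ → ℝ) (t : ℝ) : ℕ := Set.ncard {k : ℕ | 1 ≤ k ∧ s k ≤ t}

section renewal

variable {s : ℕ → ℝ}

theorem setOf_le_eq_Icc_renewalCount (hs : StrictMono s) (hs_top : Tendsto s atTop atTop)
    (t : ℝ) : {k : ℕ | 1 ≤ k ∧ s k ≤ t} = Set.Icc 1 (renewalCount s t) := by
  have hex : ∃ n, t < s (n + 1) :=
    ((hs_top.comp (tendsto_add_atTop_nat 1)).eventually_gt_atTop t).exists
  have hIcc : {k : ℕ | 1 ≤ k ∧ s k ≤ t} = Set.Icc 1 (Nat.find hex) := by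
    ext k
    simp only [Set.mem_ofPred, Set.mem_Icc, and_congr_right_iff]
    intro hk
    constructor
    · intro hsk
      by_contra! hlt
      exact (Nat.find_spec hex).not_ge (hsk.trans' (hs.monotone (by omega)))
    · intro hkn
      simpa [Nat.sub_add_cancel hk] using Nat.find_min hex (show k - 1 < Nat.find hex by omega)
  rw [renewalCount, hIcc, Set.ncard_Icc_nat, Nat.add_sub_cancel]

theorem le_renewalCount_iff (hs : StrictMono s) (hs_top : Tendsto s atTop atTop) {t : ℝ} {k : ℕ}
    (hk : 1 ≤ k) : k ≤ renewalCount s t ↔ s k ≤ t := by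
  have := Set.ext_iff.1 (setOf_le_eq_Icc_renewalCount hs hs_top t) k
  simp_all

theorem tendsto_renewalCount_atTop (hs : StrictMono s) (hs_top : Tendsto s atTop atTop) :
    Tendsto (renewalCount s) atTop atTop := by
  refine tendsto_atTop.2 fun b => ?_
  filter_upwards [eventually_ge_atTop (s (b + 1))] with t ht
  exact Nat.le_of_succ_le ((le_renewalCount_iff hs hs_top (Nat.le_add_left 1 b)).2 ht)

theorem tendsto_renewalCount_div (hs : StrictMono s) (hs₀ : 0 ≤ s 0) {μ : ℝ} (hμ : 0 < μ)
    (hlim : Tendsto (fun n => s n / n) atTop (𝓝 μ)) :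
    Tendsto (fun t => (renewalCount s t : ℝ) / t) atTop (𝓝 μ⁻¹) := by
  have hs_top : Tendsto s atTop atTop := tendsto_natCast_atTop_atTop.num hμ hlim
  have hN_top := tendsto_renewalCount_atTop hs hs_top
  have hupper : Tendsto (fun n : ℕ => n / s n) atTop (𝓝 μ⁻¹) :=
    (hlim.inv₀ hμ.ne').congr fun n => inv_div _ _
  have hlower : Tendsto (fun n : ℕ => n / s (n + 1)) atTop (𝓝 μ⁻¹) := by
    have := (tendsto_natCast_div_add_atTop (1 : ℝ)).mul (hupper.comp (tendsto_add_atTop_nat 1))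
    rw [one_mul] at this
    refine this.congr fun n => ?_
    simp only [Function.comp_apply, Nat.cast_succ]
    rw [div_mul_div_cancel₀ (by positivity)]
  refine tendsto_of_tendsto_of_tendsto_of_le_of_le' (hlower.comp hN_top) (hupper.comp hN_top) ?_ ?_
  · filter_upwards [eventually_gt_atTop 0] with t ht
    have hlt : t < s (renewalCount s t + 1) :=
      not_le.1 fun h => by simpa using (le_renewalCount_iff hs hs_top (Nat.le_add_left 1 _)).2 h
    exact div_le_div_of_nonneg_left (Nat.cast_nonneg _) ht hlt.le
  · filter_upwards [hN_top.eventually_ge_atTop 1] with t hN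
    have hle : s (renewalCount s t) ≤ t := (le_renewalCount_iff hs hs_top hN).1 le_rfl
    exact div_le_div_of_nonneg_left (Nat.cast_nonneg _) (hs₀.trans_lt (hs (by omega))) hle

theorem tendsto_sum_range_renewalCount_div {τ r : ℕ → ℝ} (hτ : ∀ n, 0 < τ n) {S₀ μ R : ℝ}
    (hS₀ : 0 ≤ S₀) (hμ : 0 < μ) (hτ_avg : Tendsto (fun n => (∑ i ∈ range n, τ i) / n) atTop (𝓝 μ))
    (hr_avg : Tendsto (fun n => (∑ i ∈ range n, r i) / n) atTop (𝓝 R)) :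
    Tendsto (fun t => (∑ i ∈ range (renewalCount (fun k => S₀ + ∑ i ∈ range k, τ i) t), r i) / t)
      atTop (𝓝 (R / μ)) := by
  set s : ℕ → ℝ := fun k => S₀ + ∑ i ∈ range k, τ i
  have hs_avg : Tendsto (fun n : ℕ => s n / n) atTop (𝓝 μ) := by
    have := (tendsto_const_nhds (x := S₀).div_atTop tendsto_natCast_atTop_atTop).add hτ_avg
    rw [zero_add] at this
    exact this.congr fun n => (add_div _ _ _).symm
  have hs_mono : StrictMono s := strictMono_nat_of_lt_succ fun k => by
    simp only [s, sum_range_succ]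
    linarith [hτ k]
  have hs_top := tendsto_natCast_atTop_atTop.num hμ hs_avg
  simpa only [div_eq_mul_inv] using tendsto_comp_div_of_tendsto_div_natCast hr_avg
    (tendsto_renewalCount_atTop hs_mono hs_top)
    (tendsto_renewalCount_div hs_mono (by simpa [s] using hS₀) hμ hs_avg)

end renewal

theorem strong_law_ae_comp_injective {Ω ι α : Type*} [MeasurableSpace Ω] [MeasurableSpace α]
    {P : Measure Ω} {v : ι → Ω → α} (hmeas : ∀ i, Measurable (v i)) (hindep : iIndepFun v P)
    {b : ℕ → ι} (hb : Function.Injective b) {π : Measure α} (hlaw : ∀ n, P.map (v (b n)) = π)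
    {g : α → ℝ} (hg : Measurable g) (hgint : Integrable g π) :
    ∀ᵐ ω ∂P, Tendsto (fun n => (∑ j ∈ range n, g (v (b j) ω)) / n) atTop (𝓝 (∫ p, g p ∂π)) := by
  have hident : ∀ i, IdentDistrib (v (b i)) (v (b 0)) P P :=
    fun i => ⟨(hmeas _).aemeasurable, (hmeas _).aemeasurable, by rw [hlaw, hlaw]⟩
  have hint : Integrable (g ∘ v (b 0)) P :=
    (integrable_map_measure hg.aestronglyMeasurable (hmeas _).aemeasurable).1 (hlaw 0 ▸ hgint)
  have hmean : P[g ∘ v (b 0)] = ∫ p, g p ∂π := by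
    rw [← hlaw 0, integral_map (hmeas _).aemeasurable hg.aestronglyMeasurable]
    rfl
  have := strong_law_ae_real (fun j => g ∘ v (b j)) hint
    (fun i j hij => (hindep.indepFun (hb.ne hij)).comp hg hg) (fun i => (hident i).comp hg)
  rwa [hmean] at this

theorem integral_inv_pos {π : Measure ℝ} [NeZero π] (hπ : π (Set.Iic 0) = 0)
    (hint : Integrable (fun p => p⁻¹) π) : 0 < ∫ p, p⁻¹ ∂π := by
  have hpos : ∀ᵐ p ∂π, 0 < p := by
    rw [ae_iff]
    simpa only [not_lt, ← Set.Iic_def] using hπ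
  rw [integral_pos_iff_support_of_nonneg_ae (hpos.mono fun p hp => (inv_pos.2 hp).le) hint,
    measure_congr (ae_eq_univ.2 (measure_mono_null ?_ hπ))]
  · exact Measure.measure_univ_pos.2 (NeZero.ne π)
  · intro p hp
    simp_all

theorem current_lln_alternating_general
    {Ω : Type*} [MeasurableSpace Ω] (P : Measure Ω)
    (πp πm : Measure ℝ) [IsProbabilityMeasure πp] [IsProbabilityMeasure πm]
    (hπp : πp (Set.Iic 0) = 0) (hπm : πm (Set.Iic 0) = 0)
    (hp2 : Integrable (fun p => p ^ 2) πp) (hm2 : Integrable (fun p => p ^ 2) πm)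
    (hp1 : Integrable (fun p => p⁻¹) πp) (hm1 : Integrable (fun p => p⁻¹) πm)
    -- (v n) represents v_{n+1} : odd indices k = n+1, i.e. even n, have law π⁺
    (v : ℕ → Ω → ℝ) (hmeas : ∀ n, Measurable (v n))
    (hindep : iIndepFun v P)
    (hpos : ∀ n, ∀ᵐ ω ∂P, 0 < v n ω)
    (hlaw : ∀ n, Measure.map (v n) P = if Even n then πp else πm)
    (S₀ : ℝ) (hS₀ : 0 ≤ S₀)
    (S : ℕ → Ω → ℝ) (hS : ∀ k ω, S k ω = S₀ + ∑ i ∈ Finset.range k, (v i ω)⁻¹)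
    (N : ℝ → Ω → ℕ) (hN : ∀ t ω, N t ω = Set.ncard {k : ℕ | 1 ≤ k ∧ S k ω ≤ t})
    (J : ℝ → Ω → ℝ)
    (hJ : ∀ t ω, J t ω =
      (1 / 2) * ∑ k ∈ Finset.Icc 1 (N t ω), (-1 : ℝ) ^ (k + 1) * (v (k - 1) ω) ^ 2) :
    ∀ᵐ ω ∂P, Tendsto (fun t : ℝ => J t ω / t) atTop
      (nhds ((1 / 2) * ((∫ p, p ^ 2 ∂πp) - ∫ p, p ^ 2 ∂πm) /
        ((∫ p, p⁻¹ ∂πp) + ∫ p, p⁻¹ ∂πm))) := by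
  have hlaw_even (n : ℕ) : P.map (v (2 * n)) = πp := by simp [hlaw]
  have hlaw_odd (n : ℕ) : P.map (v (2 * n + 1)) = πm := by simp [hlaw]
  have heven : Function.Injective (2 * ·) := mul_right_injective₀ two_ne_zero
  have hodd : Function.Injective (2 * · + 1) := (add_left_injective 1).comp heven
  have hμ : 0 < ((∫ p, p⁻¹ ∂πp) + ∫ p, p⁻¹ ∂πm) / 2 := by
    have := integral_inv_pos hπp hp1
    have := integral_inv_pos hπm hm1
    positivity
  filter_upwards [strong_law_ae_comp_injective hmeas hindep heven hlaw_even measurable_inv hp1,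
    strong_law_ae_comp_injective hmeas hindep hodd hlaw_odd measurable_inv hm1,
    strong_law_ae_comp_injective hmeas hindep heven hlaw_even (continuous_pow 2).measurable hp2,
    strong_law_ae_comp_injective hmeas hindep hodd hlaw_odd (continuous_pow 2).measurable hm2,
    ae_all_iff.2 hpos] with ω hτ_even hτ_odd hv_even hv_odd hv
  have hτ_avg := tendsto_sum_range_div_of_even_odd (a := fun i => (v i ω)⁻¹) hτ_even hτ_odd
  have hr_avg := tendsto_sum_range_div_of_even_odd (a := fun i => (-1 : ℝ) ^ i * v i ω ^ 2)
    (hv_even.congr fun m => by simp [pow_mul])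
    (hv_odd.neg.congr fun m => by simp [pow_succ, pow_mul, neg_div])
  have hN_eq (t : ℝ) : N t ω = renewalCount (fun k => S₀ + ∑ i ∈ range k, (v i ω)⁻¹) t := by
    simp only [hN, hS, renewalCount]
  have := (tendsto_sum_range_renewalCount_div (fun n => inv_pos.2 (hv n)) hS₀ hμ hτ_avg
    hr_avg).const_mul (1 / 2)
  convert this using 2 with t
  · rw [hJ, hN_eq, sum_Icc_neg_one_pow_succ_mul_eq_sum_range (fun i => v i ω ^ 2), mul_div_assoc]
  · field_simp
    ring

/-- Law of large numbers for the current of the alternating renewal process: if the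
velocities `v_k` are independent with law `π⁺` for odd `k` and `π⁻` for even `k`
(both supported on `(0,∞)`, with finite second moment and finite mean inverse), then
almost surely `J[0,t]/t → (1/2)(π⁺(p²) − π⁻(p²)) / (π⁺(1/p) + π⁻(1/p))`. -/
theorem current_lln_alternating
    {Ω : Type*} [MeasurableSpace Ω] (P : Measure Ω) [IsProbabilityMeasure P]
    (πp πm : Measure ℝ) [IsProbabilityMeasure πp] [IsProbabilityMeasure πm]
    (hπp : πp (Set.Iic 0) = 0) (hπm : πm (Set.Iic 0) = 0)
    (hp2 : Integrable (fun p => p ^ 2) πp) (hm2 : Integrable (fun p => p ^ 2) πm)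
    (hp1 : Integrable (fun p => p⁻¹) πp) (hm1 : Integrable (fun p => p⁻¹) πm)
    -- (v n) represents v_{n+1} : odd indices k = n+1, i.e. even n, have law π⁺
    (v : ℕ → Ω → ℝ) (hmeas : ∀ n, Measurable (v n))
    (hindep : iIndepFun v P)
    (hpos : ∀ n, ∀ᵐ ω ∂P, 0 < v n ω)
    (hlaw : ∀ n, Measure.map (v n) P = if Even n then πp else πm)
    (S₀ : ℝ) (hS₀ : 0 ≤ S₀)
    (S : ℕ → Ω → ℝ) (hS : ∀ k ω, S k ω = S₀ + ∑ i ∈ Finset.range k, (v i ω)⁻¹)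
    (N : ℝ → Ω → ℕ) (hN : ∀ t ω, N t ω = Set.ncard {k : ℕ | 1 ≤ k ∧ S k ω ≤ t})
    (J : ℝ → Ω → ℝ)
    (hJ : ∀ t ω, J t ω =
      (1 / 2) * ∑ k ∈ Finset.Icc 1 (N t ω), (-1 : ℝ) ^ (k + 1) * (v (k - 1) ω) ^ 2) :
    ∀ᵐ ω ∂P, Tendsto (fun t : ℝ => J t ω / t) atTop
      (nhds ((1 / 2) * ((∫ p, p ^ 2 ∂πp) - ∫ p, p ^ 2 ∂πm) /
        ((∫ p, p⁻¹ ∂πp) + ∫ p, p⁻¹ ∂πm))) :=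
  current_lln_alternating_general P πp πm hπp hπm hp2 hm2 hp1 hm1 v hmeas hindep hpos hlaw S₀ hS₀ S
    hS N hN J hJ
end
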